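/- In A_n(X) with n odd, for all a,b,c,d ∈ X one has F(c,a)·E·G(b,d)·O = γ(a,b)·W(c,d)·O, where O = e_1 e_3 ⋯ e_{n−2} and E = e_2 e_4 ⋯ e_{n−1}. -/
import Mathlib


/-- The ascending product `e j * e (j+1) * ⋯ * e k` (empty if `k + 1 ≤ j`). -/
def ascProd {A : Type*} [Ring A] (e : ℕ → A) (j k : ℕ) : A :=
  ((List.range (k + 1 - j)).map (fun i => e (j + i))).prod

/-- The descending product `e k * e (k-1) * ⋯ * e j` (empty if `k + 1 ≤ j`). -/
def descProd {A : Type*} [Ring A] (e : ℕ → A) (j k : ℕ) : A :=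
  ((List.range (k + 1 - j)).map (fun i => e (k - i))).prod

/-- For `n` odd, `O = e 1 * e 3 * ⋯ * e (n-2)` (equal to `1` when `n = 1`). -/
def Oprod {A : Type*} [Ring A] (e : ℕ → A) (n : ℕ) : A :=
  ((List.range ((n - 1) / 2)).map (fun i => e (2 * i + 1))).prod

/-- For `n` odd, `E = e 2 * e 4 * ⋯ * e (n-1)` (equal to `1` when `n = 1`). -/
def Eprod {A : Type*} [Ring A] (e : ℕ → A) (n : ℕ) : A :=
  ((List.range ((n - 1) / 2)).map (fun i => e (2 * i + 2))).prod

/-- For `n` even, `Θ = e 1 * e 3 * ⋯ * e (n-1)`. -/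
def ThetaProd {A : Type*} [Ring A] (e : ℕ → A) (n : ℕ) : A :=
  ((List.range (n / 2)).map (fun i => e (2 * i + 1))).prod

/-- For `n` even, `Ω = e 2 * e 4 * ⋯ * e (n-2)` (equal to `1` when `n = 2`). -/
def OmegaProd {A : Type*} [Ring A] (e : ℕ → A) (n : ℕ) : A :=
  ((List.range (n / 2 - 1)).map (fun i => e (2 * i + 2))).prod

/-- The defining relations (L1)–(L38) of the algebraic label algebra `A_n(X)`,
with TL generators `e i` (`1 ≤ i ≤ n - 1`), label generators `F a b`, `G a b`
(even) and `W a b`, `V a b` (odd), and parameters `β`, `α a b`, `δ a b`, `γ a b`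
in a commutative base ring `R`. -/
structure LabelAlgebraRel (R : Type*) [CommRing R] (A : Type*) [Ring A] [Algebra R A]
    (X : Type*) (n : ℕ) (e : ℕ → A) (F G W V : X → X → A)
    (β : R) (α δ γ : X → X → R) : Prop where
  L1 : ∀ i j, 1 ≤ i → i ≤ n - 1 → 1 ≤ j → j ≤ n - 1 → (i + 2 ≤ j ∨ j + 2 ≤ i) →
    e i * e j = e j * e i
  L2 : ∀ (a b : X) (j : ℕ), 2 ≤ j → j ≤ n - 1 → F a b * e j = e j * F a b
  L3 : ∀ (a b : X) (j : ℕ), 1 ≤ j → j ≤ n - 2 → G a b * e j = e j * G a b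
  L4 : ∀ (a b c d : X), 2 ≤ n → F a b * G c d = G c d * F a b
  L5 : ∀ i j, 1 ≤ i → i ≤ n - 1 → 1 ≤ j → j ≤ n - 1 → (i = j + 1 ∨ j = i + 1) →
    e i * e j * e i = e i
  L6 : ∀ (a b : X) (j : ℕ), 2 ≤ j → j ≤ n - 1 → e j * W a b = W a b * e (j - 1)
  L7 : ∀ (a b : X) (j : ℕ), 1 ≤ j → j ≤ n - 2 → e j * V a b = V a b * e (j + 1)
  L8 : ∀ (a b c d : X), 2 ≤ n → G a b * W c d = W c a * e (n - 1) * G b d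
  L9 : ∀ (a b c d : X), 2 ≤ n → F a b * V c d = V a d * e 1 * F b c
  L10 : ∀ (a b c d : X), 2 ≤ n → W a b * F c d = F a c * e 1 * W d b
  L11 : ∀ (a b c d : X), 2 ≤ n → V a b * G c d = G b c * e (n - 1) * V a d
  L12 : ∀ (a b : X), 2 ≤ n → e 1 * W a b = ascProd e 1 (n - 1) * V a b
  L13 : ∀ (a b : X), 2 ≤ n → W a b * e (n - 1) = V a b * ascProd e 1 (n - 1)
  L14 : ∀ (a b : X), 2 ≤ n → e (n - 1) * V a b = descProd e 1 (n - 1) * W a b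
  L15 : ∀ (a b : X), 2 ≤ n → V a b * e 1 = W a b * descProd e 1 (n - 1)
  L16 : ∀ (a b c d : X), W a b * W c d = F a c * ascProd e 1 (n - 1) * G b d
  L17 : ∀ (a b c d : X), V a b * V c d = G b d * descProd e 1 (n - 1) * F a c
  L18 : ∀ (a b c d : X), 2 ≤ n → V a b * e 1 * W c d = F a c * G b d
  L19 : ∀ j, 1 ≤ j → j ≤ n - 1 → e j * e j = β • e j
  L20 : ∀ (a b c d : X), F c a * F b d = α a b • F c d
  L21 : ∀ (a b : X), 2 ≤ n → e 1 * F a b * e 1 = α a b • e 1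
  L22 : ∀ (a b c d : X), F c a * W b d = α a b • W c d
  L23 : ∀ (a b c d : X), V a d * F b c = α a b • V c d
  L24 : ∀ (a b c d : X), V a c * W b d = α a b • G c d
  L25 : ∀ (a b c d : X), G c a * G b d = δ a b • G c d
  L26 : ∀ (a b : X), 2 ≤ n → e (n - 1) * G a b * e (n - 1) = δ a b • e (n - 1)
  L27 : ∀ (a b c d : X), G c a * V d b = δ a b • V d c
  L28 : ∀ (a b c d : X), W c a * G b d = δ a b • W c d
  L29 : ∀ (a b c d : X), W c a * V d b = δ a b • F c d
  L30 : Odd n → ∀ (a b c d : X),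
    W c b * Oprod e n * W a d * Oprod e n = γ a b • (W c d * Oprod e n)
  L31 : Odd n → ∀ (a b c d : X),
    F c a * Eprod e n * V d b * Eprod e n = γ a b • (F c d * Eprod e n)
  L32 : Odd n → ∀ (a b c d : X),
    V a d * Eprod e n * V c b * Eprod e n = γ a b • (V c d * Eprod e n)
  L33 : Odd n → ∀ (a b c d : X),
    G c b * Oprod e n * W a d * Oprod e n = γ a b • (G c d * Oprod e n)
  L34 : Even n → ∀ (a b : X),
    ThetaProd e n * W a b * ThetaProd e n = γ a b • ThetaProd e n
  L35 : n = 1 → ∀ (a b c d : X), F c a * G b d = γ a b • W c d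
  L36 : n = 1 → ∀ (a b c d : X), G d b * F a c = γ a b • V c d
  L37 : n = 1 → ∀ (a b c d : X), W c b * F a d = γ a b • F c d
  L38 : n = 1 → ∀ (a b c d : X), V a c * G b d = γ a b • G c d

private lemma list_prod_range_succ' {A : Type*} [Ring A] (f : ℕ → A) (k : ℕ) :
    ((List.range (k+1)).map f).prod = ((List.range k).map f).prod * f k := by
  simp [List.range_succ]

private lemma shift_prod' {A : Type*} [Ring A] (f g : ℕ → A) (x : A) :
    ∀ m : ℕ, (∀ i < m, x * f i = g i * x) →
      x * ((List.range m).map f).prod = ((List.range m).map g).prod * x := by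
  intro m
  induction m with
  | zero => simp
  | succ k ih =>
    intro h
    rw [list_prod_range_succ', list_prod_range_succ', ← mul_assoc,
      ih (fun i hi => h i (hi.trans (Nat.lt_succ_self k))), mul_assoc,
      h k (Nat.lt_succ_self k), ← mul_assoc]

theorem stmt {R : Type*} [CommRing R] {A : Type*} [Ring A] [Algebra R A] {X : Type*}
    (n : ℕ) (e : ℕ → A) (F G W V : X → X → A) (β : R) (α δ γ : X → X → R)
    (hrel : LabelAlgebraRel R A X n e F G W V β α δ γ)
    (hodd : Odd n) (a b c d : X) :
    F c a * Eprod e n * G b d * Oprod e n = γ a b • (W c d * Oprod e n) := by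
  obtain ⟨m, hm⟩ := hodd
  have hm2 : (n - 1) / 2 = m := by omega
  have hn1 : n - 1 = 2 * m := by omega
  -- notation
  set Opr : A := ((List.range m).map (fun i => e (2 * i + 1))).prod with hOpr
  set Epr : A := ((List.range m).map (fun i => e (2 * i + 2))).prod with hEpr
  have hO : Oprod e n = Opr := by rw [Oprod, hm2]
  have hE : Eprod e n = Epr := by rw [Eprod, hm2]
  -- partial O products
  have hOk : ∀ k : ℕ, k ≤ m →
      ascProd e 1 (2 * k) * ((List.range k).map (fun i => e (2 * i + 1))).prod
        = ((List.range k).map (fun i => e (2 * i + 1))).prod := by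
    intro k
    induction k with
    | zero => simp [ascProd]
    | succ j ih =>
      intro hk
      have haj : ascProd e 1 (2 * (j + 1))
          = ascProd e 1 (2 * j) * e (2 * j + 1) * e (2 * j + 2) := by
        have h1 : 2 * (j + 1) + 1 - 1 = (2 * j + 1 - 1) + 1 + 1 := by omega
        rw [ascProd, ascProd, h1, list_prod_range_succ', list_prod_range_succ']
        have h2 : 2 * j + 1 - 1 = 2 * j := by omega
        rw [h2, show 1 + 2 * j = 2 * j + 1 from by omega,
          show 1 + (2 * j + 1) = 2 * j + 2 from by omega]
      have comm1 : e (2 * j + 1) * ((List.range j).map (fun i => e (2 * i + 1))).prod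
          = ((List.range j).map (fun i => e (2 * i + 1))).prod * e (2 * j + 1) := by
        refine shift_prod' _ _ _ j (fun i hi => ?_)
        exact hrel.L1 (2 * j + 1) (2 * i + 1) (by omega) (by omega) (by omega) (by omega)
          (Or.inr (by omega))
      have comm2 : e (2 * j + 2) * ((List.range j).map (fun i => e (2 * i + 1))).prod
          = ((List.range j).map (fun i => e (2 * i + 1))).prod * e (2 * j + 2) := by
        refine shift_prod' _ _ _ j (fun i hi => ?_)
        exact hrel.L1 (2 * j + 2) (2 * i + 1) (by omega) (by omega) (by omega) (by omega)
          (Or.inr (by omega))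
      have hL5 : e (2 * j + 1) * e (2 * j + 2) * e (2 * j + 1) = e (2 * j + 1) :=
        hrel.L5 (2 * j + 1) (2 * j + 2) (by omega) (by omega) (by omega) (by omega)
          (Or.inr rfl)
      rw [haj, list_prod_range_succ']
      calc ascProd e 1 (2 * j) * e (2 * j + 1) * e (2 * j + 2) *
            (((List.range j).map (fun i => e (2 * i + 1))).prod * e (2 * j + 1))
          = ascProd e 1 (2 * j) * e (2 * j + 1) *
            (e (2 * j + 2) * ((List.range j).map (fun i => e (2 * i + 1))).prod) *
            e (2 * j + 1) := by
            rw [mul_assoc, ← mul_assoc (e (2 * j + 2)), ← mul_assoc, ← mul_assoc]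
        _ = ascProd e 1 (2 * j) *
            (e (2 * j + 1) * ((List.range j).map (fun i => e (2 * i + 1))).prod) *
            (e (2 * j + 2) * e (2 * j + 1)) := by
            rw [comm2]
            rw [mul_assoc (ascProd e 1 (2 * j)), mul_assoc (ascProd e 1 (2 * j))]
            ring_nf
            rw [mul_assoc, mul_assoc, mul_assoc, mul_assoc]
        _ = ascProd e 1 (2 * j) * ((List.range j).map (fun i => e (2 * i + 1))).prod *
            (e (2 * j + 1) * e (2 * j + 2) * e (2 * j + 1)) := by
            rw [comm1]
            rw [mul_assoc, mul_assoc, mul_assoc, mul_assoc]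
        _ = ascProd e 1 (2 * j) * ((List.range j).map (fun i => e (2 * i + 1))).prod *
            e (2 * j + 1) := by rw [hL5]
        _ = ((List.range j).map (fun i => e (2 * i + 1))).prod * e (2 * j + 1) := by
            rw [ih (by omega)]
  have hAscO : ascProd e 1 (n - 1) * Opr = Opr := by
    rw [hn1, hOpr]; exact hOk m le_rfl
  -- W c b * O = E * W c b
  have hWO : W c b * Opr = Epr * W c b := by
    refine shift_prod' _ _ _ m (fun i hi => ?_)
    have := hrel.L6 c b (2 * i + 2) (by omega) (by omega)
    simpa using this.symm
  -- F c a * E = E * F c a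
  have hFE : F c a * Epr = Epr * F c a := by
    refine shift_prod' _ _ _ m (fun i hi => ?_)
    exact hrel.L2 c a (2 * i + 2) (by omega) (by omega)
  -- G b d * O = O * G b d
  have hGO : G b d * Opr = Opr * G b d := by
    refine shift_prod' _ _ _ m (fun i hi => ?_)
    exact hrel.L3 b d (2 * i + 1) (by omega) (by omega)
  have hL30 : W c b * Opr * W a d * Opr = γ a b • (W c d * Opr) := by
    rw [← hO]; exact hrel.L30 ⟨m, by omega⟩ a b c d
  rw [hO, hE, ← hL30]
  rw [hWO, mul_assoc Epr, hrel.L16 c b a d]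
  rw [mul_assoc Epr _ Opr]
  have h2 : F c a * ascProd e 1 (n - 1) * G b d * Opr = F c a * Opr * G b d := by
    rw [mul_assoc (F c a * ascProd e 1 (n - 1)), hGO, ← mul_assoc,
      mul_assoc (F c a), hAscO]
  rw [h2, hFE, mul_assoc (Epr * F c a), hGO, ← mul_assoc, mul_assoc Epr (F c a) Opr,
    mul_assoc Epr (F c a * Opr) (G b d)]
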